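/- Let h : ℕ → ℕ be monotone and inflationary. Then for every ordinal α ≤ ω^ω, the Hardy function h^α is monotone and inflationary: for all x ≤ y in ℕ, x ≤ h^α(x) ≤ h^α(y). -/

import Mathlib

noncomputable section

namespace HardyCNF

open Ordinal

/-- Find the first nonzero entry of a (little-endian) coefficient list:
returns `(k, c, rest)` when the list is `replicate k 0 ++ (c+1) :: rest`. -/
def splitNZ : List ℕ → Option (ℕ × ℕ × List ℕ)
  | [] => none
  | 0 :: t => (splitNZ t).map (fun x => (x.1 + 1, x.2))
  | (c+1) :: t => some (0, c, t)

theorem splitNZ_eq : ∀ {ℓ : List ℕ} {k c : ℕ} {r : List ℕ},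
    splitNZ ℓ = some (k, c, r) → ℓ = List.replicate k 0 ++ (c+1) :: r := by
  intro ℓ
  induction ℓ with
  | nil => intro k c r h; simp [splitNZ] at h
  | cons hd t ih =>
    intro k c r h
    match hd with
    | 0 =>
      simp only [splitNZ, Option.map_eq_some_iff] at h
      obtain ⟨⟨k', c', r'⟩, hs, he⟩ := h
      obtain ⟨h1, h2, h3⟩ : k' + 1 = k ∧ c' = c ∧ r' = r := by
        simpa using he
      subst h1 h2 h3
      simp [List.replicate_succ, ih hs]
    | c'+1 =>
      simp only [splitNZ, Option.some.injEq] at h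
      obtain ⟨h1, h2, h3⟩ : (0 : ℕ) = k ∧ c' = c ∧ t = r := by simpa using h
      subst h1 h2 h3
      simp

/-- The ordinal `ω^0·c_0 + ω^1·c_1 + ⋯` denoted by a little-endian coefficient list. -/
def toOrd : List ℕ → Ordinal.{0}
  | [] => 0
  | c :: ℓ => omega0 * toOrd ℓ + c

theorem toOrd_replicate_zero_append (k : ℕ) (ℓ : List ℕ) :
    toOrd (List.replicate k 0 ++ ℓ) = omega0 ^ (k : Ordinal) * toOrd ℓ := by
  induction k with
  | zero => simp [toOrd]
  | succ n ih =>
    rw [List.replicate_succ, List.cons_append]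
    show omega0 * toOrd (List.replicate n 0 ++ ℓ) + (0:ℕ) = _
    rw [ih]
    have hcast : ((n+1 : ℕ) : Ordinal) = 1 + (n : Ordinal) := by
      have : ((1+n : ℕ) : Ordinal) = 1 + (n : Ordinal) := by push_cast; ring_nf
      rw [← this, Nat.add_comm]
    rw [hcast, opow_add, opow_one, mul_assoc]
    simp

theorem toOrd_succ_lt (c : ℕ) (ℓ : List ℕ) : toOrd (c :: ℓ) < toOrd ((c+1) :: ℓ) := by
  show omega0 * toOrd ℓ + (c : Ordinal) < omega0 * toOrd ℓ + ((c:ℕ)+1 : ℕ)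
  apply (add_lt_add_iff_left _).mpr
  push_cast
  exact lt_add_one _

theorem toOrd_limit_lt (x k c : ℕ) (r : List ℕ) :
    toOrd (List.replicate k 0 ++ (x+1) :: c :: r) <
      toOrd (0 :: (List.replicate k 0 ++ (c+1) :: r)) := by
  have h0 : toOrd (0 :: (List.replicate k 0 ++ (c+1) :: r))
      = omega0 * (omega0 ^ (k : Ordinal) * toOrd ((c+1) :: r)) := by
    show omega0 * toOrd (List.replicate k 0 ++ (c+1) :: r) + (0:ℕ) = _
    rw [toOrd_replicate_zero_append]; simp
  have hsw : omega0 * omega0 ^ (k : Ordinal) = omega0 ^ (k : Ordinal) * omega0 := by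
    have hcast : ((k+1 : ℕ) : Ordinal) = 1 + (k : Ordinal) := by
      have : ((1+k : ℕ) : Ordinal) = 1 + (k : Ordinal) := by push_cast; ring_nf
      rw [← this, Nat.add_comm]
    have h1 : omega0 * omega0 ^ (k : Ordinal) = omega0 ^ ((k+1 : ℕ) : Ordinal) := by
      rw [hcast, opow_add, opow_one]
    have h2 : omega0 ^ (k : Ordinal) * omega0 = omega0 ^ ((k+1 : ℕ) : Ordinal) := by
      push_cast
      rw [opow_add, opow_one]
    rw [h1, h2]
  rw [h0, toOrd_replicate_zero_append, ← mul_assoc, hsw, mul_assoc]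
  refine mul_lt_mul_of_pos_left ?_ (opow_pos (k : Ordinal) omega0_pos)
  show omega0 * toOrd (c :: r) + ((x:ℕ)+1 : ℕ) < omega0 * toOrd ((c+1) :: r)
  have hc : toOrd ((c+1) :: r) = toOrd (c :: r) + 1 := by
    show omega0 * toOrd r + ((c:ℕ)+1:ℕ) = (omega0 * toOrd r + c) + 1
    push_cast; rw [add_assoc]
  rw [hc, mul_add, mul_one]
  apply (add_lt_add_iff_left _).mpr
  exact nat_lt_omega0 (x+1)

/-- The Hardy hierarchy `h^α` relative to `h`, for `α < ω^ω` given in Cantor normal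
form by a little-endian coefficient list:  `h^0(x) = x`, `h^{α+1}(x) = h^α(h x)`,
`h^λ(x) = h^{λ(x)}(x)` with the standard fundamental sequences. -/
def hardy (h : ℕ → ℕ) : List ℕ → ℕ → ℕ
  | [], x => x
  | (c+1) :: ℓ, x => hardy h (c :: ℓ) (h x)
  | 0 :: ℓ, x =>
    match hs : splitNZ ℓ with
    | none => x
    | some (k, c, r) => hardy h (List.replicate k 0 ++ (x+1) :: c :: r) x
  termination_by ℓ _ => toOrd ℓ
  decreasing_by
  · exact toOrd_succ_lt c ℓ
  · rw [splitNZ_eq hs]; exact toOrd_limit_lt x k c r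

/-- The Cichoń hierarchy `h_α` relative to `h`:  `h_0(x) = 0`,
`h_{α+1}(x) = 1 + h_α(h x)`, `h_λ(x) = h_{λ(x)}(x)`. -/
def cichon (h : ℕ → ℕ) : List ℕ → ℕ → ℕ
  | [], _ => 0
  | (c+1) :: ℓ, x => 1 + cichon h (c :: ℓ) (h x)
  | 0 :: ℓ, x =>
    match hs : splitNZ ℓ with
    | none => 0
    | some (k, c, r) => cichon h (List.replicate k 0 ++ (x+1) :: c :: r) x
  termination_by ℓ _ => toOrd ℓ
  decreasing_by
  · exact toOrd_succ_lt c ℓ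
  · rw [splitNZ_eq hs]; exact toOrd_limit_lt x k c r

/-- An ordinal index `≤ ω^ω`: either `α < ω^ω` given by its CNF coefficient list,
or `ω^ω` itself (represented by `none`). -/
abbrev OrdIdx := Option (List ℕ)

/-- the CNF coefficient list of `ω^k` -/
def omegaPow (k : ℕ) : List ℕ := List.replicate k 0 ++ [1]

/-- Hardy hierarchy for indices `α ≤ ω^ω`, using `ω^ω(x) = ω^{x+1}`. -/
def hardyTop (h : ℕ → ℕ) : OrdIdx → ℕ → ℕ
  | some ℓ, x => hardy h ℓ x
  | none, x => hardy h (omegaPow (x+1)) x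

/-- Cichoń hierarchy for indices `α ≤ ω^ω`. -/
def cichonTop (h : ℕ → ℕ) : OrdIdx → ℕ → ℕ
  | some ℓ, x => cichon h ℓ x
  | none, x => cichon h (omegaPow (x+1)) x

end HardyCNF


/-! Induction along the recursion defining `h^α`; the successor case is immediate. At a limit `λ`
with last term `ω^{k+1}`, the fundamental sequence satisfies `λ(y) = λ(x) + ω^k·(y - x)` for
`x ≤ y`, so `h^λ(y) = h^{λ(x)}((h^{ω^k})^{y-x}(y))`, and the induction hypothesis for `λ(x)`
applies because iterates of the inflationary `h^{ω^k}` are inflationary. For `ω^ω` it remains to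
see that `k ↦ h^{ω^k}(z)` is monotone, which follows from
`h^{ω^{k+1}}(z) = h^{ω^k}((h^{ω^k})^z(z)) ≥ h^{ω^k}(z)`. -/

namespace HardyCNF

theorem apply_add_eq_apply_iterate {β γ : Type*} {f : ℕ → β → γ} {g : β → β}
    (hf : ∀ c x, f (c + 1) x = f c (g x)) (c d : ℕ) (x : β) :
    f (c + d) x = f c (g^[d] x) := by
  induction d generalizing x with
  | zero => rfl
  | succ d ih => rw [← Nat.add_assoc, hf, ih, Function.iterate_succ_apply]

theorem splitNZ_replicate_zero (n : ℕ) : splitNZ (List.replicate n 0) = none := by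
  induction n with
  | zero => rfl
  | succ n ih => simp [List.replicate_succ, splitNZ, ih]

theorem splitNZ_replicate_append (k c : ℕ) (r : List ℕ) :
    splitNZ (List.replicate k 0 ++ (c + 1) :: r) = some (k, c, r) := by
  induction k with
  | zero => rfl
  | succ k ih => simp [List.replicate_succ, splitNZ, ih]

variable (h : ℕ → ℕ)

theorem hardy_replicate_zero (n x : ℕ) : hardy h (List.replicate n 0) x = x := by
  cases n with
  | zero => rw [List.replicate_zero, hardy]
  | succ n => rw [List.replicate_succ, hardy, splitNZ_replicate_zero]

theorem hardy_zero_cons_of_splitNZ_eq_some {t : List ℕ} {k c : ℕ} {r : List ℕ}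
    (hs : splitNZ t = some (k, c, r)) (x : ℕ) :
    hardy h (0 :: t) x = hardy h (List.replicate k 0 ++ (x + 1) :: c :: r) x := by
  rw [hardy, hs]

def hardyOmegaPow : ℕ → ℕ → ℕ
  | 0 => h
  | k + 1 => fun x => (hardyOmegaPow k)^[x + 1] x

theorem hardy_replicate_succ (k c : ℕ) (rest : List ℕ) (x : ℕ) :
    hardy h (List.replicate k 0 ++ (c + 1) :: rest) x
      = hardy h (List.replicate k 0 ++ c :: rest) (hardyOmegaPow h k x) := by
  induction k generalizing c rest x with
  | zero => rw [List.replicate_zero, List.nil_append, hardy, hardyOmegaPow, List.nil_append]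
  | succ k ih =>
    have hlim := apply_add_eq_apply_iterate
      (f := fun n z => hardy h (List.replicate k 0 ++ n :: c :: rest) z)
      (fun n z => ih n (c :: rest) z) 0 (x + 1) x
    rw [Nat.zero_add] at hlim
    rw [List.replicate_succ, List.cons_append,
      hardy_zero_cons_of_splitNZ_eq_some h (splitNZ_replicate_append k c rest),
      hlim, List.append_cons, ← List.replicate_succ', List.replicate_succ, List.cons_append]
    rfl

theorem hardy_replicate_add (k c d : ℕ) (rest : List ℕ) (x : ℕ) :
    hardy h (List.replicate k 0 ++ (c + d) :: rest) x
      = hardy h (List.replicate k 0 ++ c :: rest) ((hardyOmegaPow h k)^[d] x) :=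
  apply_add_eq_apply_iterate (f := fun n z => hardy h (List.replicate k 0 ++ n :: rest) z)
    (fun n z => hardy_replicate_succ h k n rest z) c d x

theorem hardy_omegaPow (k : ℕ) : hardy h (omegaPow k) = hardyOmegaPow h k := by
  funext x
  rw [omegaPow, hardy_replicate_succ, List.append_cons, ← List.replicate_succ',
    List.append_nil, hardy_replicate_zero]

theorem le_hardy (hinfl : id ≤ h) (ℓ : List ℕ) : id ≤ hardy h ℓ := by
  intro x
  fun_induction hardy h ℓ x with
  | case1 x => exact le_rfl
  | case2 c ℓ x ih => exact (hinfl x).trans ih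
  | case3 ℓ x hs => exact le_rfl
  | case4 ℓ x k c r hs ih => exact ih

theorem id_le_hardyOmegaPow (hinfl : id ≤ h) (k : ℕ) : id ≤ hardyOmegaPow h k := by
  rw [← hardy_omegaPow]
  exact le_hardy h hinfl _

theorem hardy_monotone (hmono : Monotone h) (hinfl : id ≤ h) (ℓ : List ℕ) :
    Monotone (hardy h ℓ) := by
  intro x y hxy
  fun_induction hardy h ℓ x generalizing y with
  | case1 x => rwa [hardy]
  | case2 c ℓ x ih => rw [hardy]; exact ih (hmono hxy)
  | case3 ℓ x hs => rwa [hardy, hs]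
  | case4 ℓ x k c r hs ih =>
    rw [hardy_zero_cons_of_splitNZ_eq_some h hs, show y + 1 = x + 1 + (y - x) by omega,
      hardy_replicate_add h k (x + 1) (y - x)]
    exact ih (hxy.trans (Function.id_le_iterate_of_id_le (id_le_hardyOmegaPow h hinfl k) _ y))

theorem hardyOmegaPow_monotone (hmono : Monotone h) (hinfl : id ≤ h) (k : ℕ) :
    Monotone (hardyOmegaPow h k) := by
  rw [← hardy_omegaPow]
  exact hardy_monotone h hmono hinfl _

theorem monotone_hardyOmegaPow_index (hmono : Monotone h) (hinfl : id ≤ h) (x : ℕ) :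
    Monotone fun k => hardyOmegaPow h k x := by
  refine monotone_nat_of_le_succ fun k => ?_
  show hardyOmegaPow h k x ≤ (hardyOmegaPow h k)^[x + 1] x
  rw [Function.iterate_succ_apply']
  exact hardyOmegaPow_monotone h hmono hinfl k
    (Function.id_le_iterate_of_id_le (id_le_hardyOmegaPow h hinfl k) x x)

end HardyCNF

/-- If `h` is monotone and inflationary then so is every Hardy
function `h^α` for `α ≤ ω^ω`: for all `x ≤ y`, `x ≤ h^α(x) ≤ h^α(y)`. -/
theorem hardy_monotone_inflationary (h : ℕ → ℕ)
    (hmono : ∀ x y, x ≤ y → h x ≤ h y) (hinfl : ∀ x, x ≤ h x)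
    (α : HardyCNF.OrdIdx) (x y : ℕ) (hxy : x ≤ y) :
    x ≤ HardyCNF.hardyTop h α x ∧ HardyCNF.hardyTop h α x ≤ HardyCNF.hardyTop h α y := by
  open HardyCNF in
  have hmono' : Monotone h := fun x y => hmono x y
  cases α with
  | some ℓ => exact ⟨le_hardy h hinfl ℓ x, hardy_monotone h hmono' hinfl ℓ hxy⟩
  | none =>
    simp only [hardyTop, hardy_omegaPow]
    refine ⟨id_le_hardyOmegaPow h hinfl _ x, ?_⟩
    calc hardyOmegaPow h (x + 1) x ≤ hardyOmegaPow h (x + 1) y :=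
          hardyOmegaPow_monotone h hmono' hinfl _ hxy
      _ ≤ hardyOmegaPow h (y + 1) y :=
          monotone_hardyOmegaPow_index h hmono' hinfl y (Nat.succ_le_succ hxy)
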